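/- If S is an ε-approximation of the range space (P, B) of balls (i.e., for every ball B, | |P∩B|/|P| − |S∩B|/|S| | ≤ ε), and K is a non-increasing radial kernel bounded by 1 whose super-level sets are balls, then for every q ∈ ℝ^d, |kde_P(q) − kde_S(q)| ≤ ε. -/

import Mathlib

/-!
Layer cake: for a finite set `X` and a function `f` with values in `[0, 1]`, the average of `f`
over `X` is `∫₀¹ #{p ∈ X | τ ≤ f p} / #X dτ`. For `f = k ‖· - q‖` every superlevel set
`{τ ≤ f}` with `τ > 0` is a ball, so the two integrands differ by at most `ε` on `(0, 1]`.
-/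

open MeasureTheory Set Finset

section LayerCake

variable {α : Type*}

lemma antitone_ite_le_one_zero (a : ℝ) : Antitone fun τ : ℝ => if τ ≤ a then (1 : ℝ) else 0 :=
  fun σ τ hστ => by
    by_cases hτ : τ ≤ a
    · simp [hτ, hστ.trans hτ]
    · simp only [hτ, if_false]
      split_ifs <;> norm_num

lemma integral_zero_one_ite_le {a : ℝ} (ha : a ∈ Set.Icc 0 1) :
    ∫ τ in (0 : ℝ)..1, (if τ ≤ a then (1 : ℝ) else 0) = a := by
  have hind : (fun τ : ℝ => if τ ≤ a then (1 : ℝ) else 0) = indicator {τ | τ ≤ a} 1 := by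
    ext τ
    simp only [indicator_apply, mem_ofPred_eq, Pi.one_apply]
  rw [hind, intervalIntegral.integral_indicator ha]
  simp

lemma antitone_card_filter_le (X : Finset α) (f : α → ℝ) :
    Antitone fun τ : ℝ => (#{p ∈ X | τ ≤ f p} : ℝ) := fun _ _ hστ =>
  Nat.cast_le.mpr <| card_le_card <| monotone_filter_right X fun _ _ => hστ.trans

lemma sum_eq_integral_card_filter_le (X : Finset α) {f : α → ℝ}
    (hf : ∀ p ∈ X, f p ∈ Set.Icc 0 1) :
    ∑ p ∈ X, f p = ∫ τ in (0 : ℝ)..1, (#{p ∈ X | τ ≤ f p} : ℝ) := by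
  simp only [card_filter, Nat.cast_sum, Nat.cast_ite, Nat.cast_one, Nat.cast_zero]
  rw [intervalIntegral.integral_finsetSum fun p _ =>
    (antitone_ite_le_one_zero (f p)).intervalIntegrable]
  exact sum_congr rfl fun p hp => (integral_zero_one_ite_le (hf p hp)).symm

lemma abs_sub_sum_div_card_le_of_superlevel {X Y : Finset α} {f : α → ℝ} {ε : ℝ}
    (hX : ∀ p ∈ X, f p ∈ Set.Icc 0 1) (hY : ∀ p ∈ Y, f p ∈ Set.Icc 0 1)
    (h : ∀ τ ∈ Set.Ioc (0 : ℝ) 1,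
      |(#{p ∈ X | τ ≤ f p} : ℝ) / #X - (#{p ∈ Y | τ ≤ f p} : ℝ) / #Y| ≤ ε) :
    |(∑ p ∈ X, f p) / #X - (∑ p ∈ Y, f p) / #Y| ≤ ε := by
  have hint (Z : Finset α) : IntervalIntegrable (fun τ : ℝ => (#{p ∈ Z | τ ≤ f p} : ℝ) / #Z)
      volume 0 1 :=
    (antitone_card_filter_le Z f).intervalIntegrable.div_const _
  calc |(∑ p ∈ X, f p) / #X - (∑ p ∈ Y, f p) / #Y|
      = ‖∫ τ in (0 : ℝ)..1,
          ((#{p ∈ X | τ ≤ f p} : ℝ) / #X - (#{p ∈ Y | τ ≤ f p} : ℝ) / #Y)‖ := by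
        rw [intervalIntegral.integral_sub (hint X) (hint Y), intervalIntegral.integral_div,
          intervalIntegral.integral_div, ← sum_eq_integral_card_filter_le X hX,
          ← sum_eq_integral_card_filter_le Y hY, Real.norm_eq_abs]
    _ ≤ ε * |1 - 0| := intervalIntegral.norm_integral_le_of_norm_le_const fun τ hτ => by
        rw [uIoc_of_le zero_le_one] at hτ
        exact h τ hτ
    _ = ε := by norm_num

end LayerCake

open scoped Classical in
theorem eps_approx_kde_general (d : ℕ) (ε : ℝ)
    (P S : Finset (EuclideanSpace ℝ (Fin d)))
    (k : ℝ → ℝ)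
    (hk01 : ∀ t : ℝ, 0 ≤ t → 0 ≤ k t ∧ k t ≤ 1)
    (hlink : ∀ (q : EuclideanSpace ℝ (Fin d)) (τ : ℝ), 0 < τ →
      ∃ (c : EuclideanSpace ℝ (Fin d)) (r : ℝ),
        ∀ x : EuclideanSpace ℝ (Fin d), (τ ≤ k ‖x - q‖ ↔ x ∈ Metric.closedBall c r))
    (happrox : ∀ (c : EuclideanSpace ℝ (Fin d)) (r : ℝ),
      |((P.filter fun p => p ∈ Metric.closedBall c r).card : ℝ) / P.card -
        ((S.filter fun p => p ∈ Metric.closedBall c r).card : ℝ) / S.card| ≤ ε) :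
    ∀ q : EuclideanSpace ℝ (Fin d),
      |(∑ p ∈ P, k ‖p - q‖) / P.card - (∑ p ∈ S, k ‖p - q‖) / S.card| ≤ ε := by
  intro q
  have hk_mem (X : Finset (EuclideanSpace ℝ (Fin d))) : ∀ p ∈ X, k ‖p - q‖ ∈ Set.Icc 0 1 :=
    fun _ _ => hk01 _ (norm_nonneg _)
  refine abs_sub_sum_div_card_le_of_superlevel (hk_mem P) (hk_mem S) fun τ hτ => ?_
  obtain ⟨c, r, hball⟩ := hlink q τ hτ.1
  rw [filter_congr fun p _ => hball p, filter_congr fun p _ => hball p]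
  exact happrox c r

open scoped Classical in
theorem eps_approx_kde (d : ℕ) (ε : ℝ) (hε : 0 ≤ ε)
    (P S : Finset (EuclideanSpace ℝ (Fin d))) (hP : P.Nonempty) (hS : S.Nonempty)
    (k : ℝ → ℝ)
    (hk_anti : ∀ s t : ℝ, 0 ≤ s → s ≤ t → k t ≤ k s)
    (hk01 : ∀ t : ℝ, 0 ≤ t → 0 ≤ k t ∧ k t ≤ 1)
    (hlink : ∀ (q : EuclideanSpace ℝ (Fin d)) (τ : ℝ), 0 < τ →
      ∃ (c : EuclideanSpace ℝ (Fin d)) (r : ℝ),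
        ∀ x : EuclideanSpace ℝ (Fin d), (τ ≤ k ‖x - q‖ ↔ x ∈ Metric.closedBall c r))
    (happrox : ∀ (c : EuclideanSpace ℝ (Fin d)) (r : ℝ),
      |((P.filter fun p => p ∈ Metric.closedBall c r).card : ℝ) / P.card -
        ((S.filter fun p => p ∈ Metric.closedBall c r).card : ℝ) / S.card| ≤ ε) :
    ∀ q : EuclideanSpace ℝ (Fin d),
      |(∑ p ∈ P, k ‖p - q‖) / P.card - (∑ p ∈ S, k ‖p - q‖) / S.card| ≤ ε :=
  eps_approx_kde_general d ε P S k hk01 hlink happrox
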